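/- Define the finite-horizon optimal value functions by backward induction: V_H(x; r) = R(x; r) and, for 0 ≤ h < H, V_h(x; r) = max_{a∈A} ( R_h(x, a; r) + γ · ∑_{x'} P(x'|x,a) · V_{h+1}(x'; r) ), where A is a nonempty finite action set, states form a finite set X, 0 ≤ γ, P(·|x,a) is a sub-probability kernel (nonnegative, summing to at most 1), and the reward at step h depends on a parameter vector r only through the single value r(x⁰, a⁰) at one fixed state–action pair (x⁰, a⁰) appearing at step h₀. Suppose two reward parameters r₁, r₂ differ only at (x⁰, a⁰) with r₁(x⁰,a⁰) ≥ r₂(x⁰,a⁰). Then for every step h ≤ h₀ and every state x, 0 ≤ V_h(x; r₁) − V_h(x; r₂) ≤ γ^{h₀ − h} · (r₁(x⁰,a⁰) − r₂(x⁰,a⁰)). -/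

import Mathlib

/-! Each Bellman backup is monotone in the one-step rewards and continuation values, and passes a
uniform bound on their differences through as `ρ + γ c` (the maximum over actions and the
sub-probability average do not increase a uniform gap). Beyond step `h₀` the rewards coincide, so
the values do too; at `h₀` the gap is at most `r₁ x0 a0 - r₂ x0 a0`, and every earlier backup
multiplies it by `γ`. -/

theorem Finset.sup'_sub_sup'_mem_Icc {ι α : Type*} [AddCommGroup α] [LinearOrder α]
    [IsOrderedAddMonoid α] {s : Finset ι} (hs : s.Nonempty) {f g : ι → α} {c : α}
    (h : ∀ i ∈ s, f i - g i ∈ Set.Icc 0 c) : s.sup' hs f - s.sup' hs g ∈ Set.Icc 0 c := by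
  constructor
  · exact sub_nonneg.2 (sup'_mono_fun fun i hi => sub_nonneg.1 (h i hi).1)
  · refine sub_le_iff_le_add.2 (sup'_le _ _ fun i hi => ?_)
    exact (sub_le_iff_le_add.1 (h i hi).2).trans (add_le_add_right (le_sup' g hi) c)

theorem Finset.sum_mul_sub_sum_mul_mem_Icc {ι α : Type*} [CommRing α] [PartialOrder α]
    [IsOrderedRing α] {s : Finset ι} {p v w : ι → α} {c : α} (hp : ∀ i ∈ s, 0 ≤ p i)
    (hp₁ : ∑ i ∈ s, p i ≤ 1) (hc : 0 ≤ c) (h : ∀ i ∈ s, v i - w i ∈ Set.Icc 0 c) :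
    ∑ i ∈ s, p i * v i - ∑ i ∈ s, p i * w i ∈ Set.Icc 0 c := by
  rw [← sum_sub_distrib]
  simp_rw [← mul_sub]
  constructor
  · exact sum_nonneg fun i hi => mul_nonneg (hp i hi) (h i hi).1
  · calc ∑ i ∈ s, p i * (v i - w i)
        ≤ ∑ i ∈ s, p i * c := sum_le_sum fun i hi => mul_le_mul_of_nonneg_left (h i hi).2 (hp i hi)
      _ = (∑ i ∈ s, p i) * c := (sum_mul ..).symm
      _ ≤ c := mul_le_of_le_one_left hc hp₁

theorem bellmanBackup_sub_mem_Icc {X A : Type*} [Fintype X] [Fintype A] [Nonempty A]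
    {γ : ℝ} (hγ : 0 ≤ γ) {q : A → X → ℝ} (hq : ∀ a x', 0 ≤ q a x')
    (hq₁ : ∀ a, ∑ x', q a x' ≤ 1) {R₁ R₂ : A → ℝ} {v₁ v₂ : X → ℝ} {ρ c : ℝ} (hc : 0 ≤ c)
    (hR : ∀ a, R₁ a - R₂ a ∈ Set.Icc 0 ρ) (hv : ∀ x', v₁ x' - v₂ x' ∈ Set.Icc 0 c) :
    Finset.univ.sup' Finset.univ_nonempty (fun a => R₁ a + γ * ∑ x', q a x' * v₁ x') -
        Finset.univ.sup' Finset.univ_nonempty (fun a => R₂ a + γ * ∑ x', q a x' * v₂ x') ∈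
      Set.Icc 0 (ρ + γ * c) := by
  refine Finset.sup'_sub_sup'_mem_Icc _ fun a _ => ?_
  obtain ⟨hS₀, hS₁⟩ := Finset.sum_mul_sub_sum_mul_mem_Icc (fun x' _ => hq a x') (hq₁ a) hc
    fun x' _ => hv x'
  obtain ⟨hR₀, hR₁⟩ := hR a
  have hγS₀ := mul_nonneg hγ hS₀
  have hγS₁ := mul_le_mul_of_nonneg_left hS₁ hγ
  constructor <;> linarith

theorem value_perturbation_single_reward_general
    {X A : Type*} [Fintype X] [Fintype A] [Nonempty A]
    (H : ℕ) (γ : ℝ) (hγ0 : 0 ≤ γ)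
    (P : X → A → X → ℝ)
    (hP0 : ∀ x a x', 0 ≤ P x a x')
    (hPsum : ∀ x a, ∑ x', P x a x' ≤ 1)
    (R : ℕ → X → A → (X → A → ℝ) → ℝ)
    (Vterm : X → ℝ)
    (x0 : X) (a0 : A) (h₀ : ℕ) (hh₀ : h₀ < H)
    (hRdep : ∀ r, R h₀ x0 a0 r = r x0 a0)
    (hRindep : ∀ h x a, ¬(h = h₀ ∧ x = x0 ∧ a = a0) → ∀ r r', R h x a r = R h x a r')
    (V : ℕ → (X → A → ℝ) → X → ℝ)
    (hVH : ∀ r x, V H r x = Vterm x)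
    (hVrec : ∀ h, h < H → ∀ r x,
      V h r x = Finset.univ.sup' Finset.univ_nonempty
        (fun a => R h x a r + γ * ∑ x', P x a x' * V (h + 1) r x'))
    (r₁ r₂ : X → A → ℝ)
    (hr : r₂ x0 a0 ≤ r₁ x0 a0) :
    ∀ h ≤ h₀, ∀ x,
      0 ≤ V h r₁ x - V h r₂ x ∧
      V h r₁ x - V h r₂ x ≤ γ ^ (h₀ - h) * (r₁ x0 a0 - r₂ x0 a0) := by
  set δ := r₁ x0 a0 - r₂ x0 a0
  have hδ : 0 ≤ δ := sub_nonneg.2 hr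
  have hRdiff : ∀ h x a, R h x a r₁ - R h x a r₂ ∈ Set.Icc 0 (if h = h₀ then δ else 0) := by
    intro h x a
    by_cases hxa : h = h₀ ∧ x = x0 ∧ a = a0
    · obtain ⟨rfl, rfl, rfl⟩ := hxa
      simp [hRdep, hδ, δ]
    · rw [hRindep h x a hxa r₁ r₂, sub_self]
      split_ifs <;> simp [hδ]
  have step : ∀ h < H, ∀ c, 0 ≤ c → (∀ x', V (h + 1) r₁ x' - V (h + 1) r₂ x' ∈ Set.Icc 0 c) →
      ∀ x, V h r₁ x - V h r₂ x ∈ Set.Icc 0 ((if h = h₀ then δ else 0) + γ * c) := by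
    intro h hh c hc hv x
    rw [hVrec h hh, hVrec h hh]
    exact bellmanBackup_sub_mem_Icc hγ0 (hP0 x) (hPsum x) hc (hRdiff h x) hv
  have above : ∀ h ≤ H, h₀ < h → ∀ x, V h r₁ x - V h r₂ x ∈ Set.Icc 0 0 := by
    intro h hh
    induction hh using Nat.decreasingInduction with
    | self => simp [hVH]
    | of_succ k hk ih =>
      intro hk₀ x
      simpa [hk₀.ne'] using step k hk 0 le_rfl (ih (by omega)) x
  intro h hh
  induction hh using Nat.decreasingInduction with
  | self => simpa using step h₀ hh₀ 0 le_rfl (above (h₀ + 1) hh₀ (by omega))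
  | of_succ k hk ih =>
    intro x
    rw [show h₀ - k = h₀ - (k + 1) + 1 by omega, pow_succ', mul_assoc]
    simpa [hk.ne] using step k (by omega) _ (mul_nonneg (pow_nonneg hγ0 _) hδ) ih x

theorem value_perturbation_single_reward
    {X A : Type*} [Fintype X] [Fintype A] [Nonempty A]
    (H : ℕ) (γ : ℝ) (hγ0 : 0 ≤ γ) (hγ1 : γ ≤ 1)
    (P : X → A → X → ℝ)
    (hP0 : ∀ x a x', 0 ≤ P x a x')
    (hPsum : ∀ x a, ∑ x', P x a x' ≤ 1)
    (R : ℕ → X → A → (X → A → ℝ) → ℝ)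
    (Vterm : X → ℝ)
    (x0 : X) (a0 : A) (h₀ : ℕ) (hh₀ : h₀ < H)
    (hRdep : ∀ r, R h₀ x0 a0 r = r x0 a0)
    (hRindep : ∀ h x a, ¬(h = h₀ ∧ x = x0 ∧ a = a0) → ∀ r r', R h x a r = R h x a r')
    (V : ℕ → (X → A → ℝ) → X → ℝ)
    (hVH : ∀ r x, V H r x = Vterm x)
    (hVrec : ∀ h, h < H → ∀ r x,
      V h r x = Finset.univ.sup' Finset.univ_nonempty
        (fun a => R h x a r + γ * ∑ x', P x a x' * V (h + 1) r x'))
    (r₁ r₂ : X → A → ℝ)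
    (hr : r₂ x0 a0 ≤ r₁ x0 a0)
    (hr_eq : ∀ x a, ¬(x = x0 ∧ a = a0) → r₁ x a = r₂ x a) :
    ∀ h ≤ h₀, ∀ x,
      0 ≤ V h r₁ x - V h r₂ x ∧
      V h r₁ x - V h r₂ x ≤ γ ^ (h₀ - h) * (r₁ x0 a0 - r₂ x0 a0) :=
  value_perturbation_single_reward_general H γ hγ0 P hP0 hPsum R Vterm x0 a0 h₀ hh₀ hRdep hRindep V
    hVH hVrec r₁ r₂ hr
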